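/- arXiv:1212.6334 — 2 statements merged into one kernel-verified Lean document; each statement's English description precedes it below -/
import Mathlib

section
/- Let I be a dyadic interval and let f be a dyadic step function supported on I (a finite linear combination of indicators of dyadic subintervals of I). Then for almost every x ∈ I, f(x) = Σ_{n=0}^{∞} (|I|^{-1} ∫_I f(t) w_{I,n}(t) dt) · w_{I,n}(x), where the sum has only finitely many nonzero terms. -/
open MeasureTheory

/-- The `j`-th binary digit of a nonnegative real number `x`. -/
noncomputable def bdigit (x : ℝ) (j : ℤ) : ℕ := (Int.toNat ⌊x / 2 ^ j⌋) % 2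

/-- Binary digitwise addition (XOR) of nonnegative reals. -/
noncomputable def dxor (x y : ℝ) : ℝ :=
  ∑' j : ℤ, (((bdigit x j + bdigit y j) % 2 : ℕ) : ℝ) * 2 ^ j

/-- The dyadic interval `[2^{-k} l, 2^{-k} (l+1))`. -/
def dyadicI (k : ℤ) (l : ℕ) : Set ℝ :=
  Set.Ico ((2 : ℝ) ^ (-k) * l) ((2 : ℝ) ^ (-k) * (l + 1))

/-- The L^∞-normalized Walsh wave packet `w_{I,n}` for `I = [2^{-k} l, 2^{-k}(l+1))`. -/
noncomputable def walsh (k : ℤ) (l n : ℕ) (x : ℝ) : ℝ :=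
  Set.indicator (dyadicI k l)
    (fun x => (-1 : ℝ) ^ (∑ j ∈ Finset.range (n + 1),
      (Nat.testBit n j).toNat * bdigit x (-(j : ℤ) - k - 1))) x

/-- The Walsh–Fourier average `[f]_{I,n} = |I|^{-1} ∫_I f w_{I,n}`. -/
noncomputable def avg (k : ℤ) (l n : ℕ) (f : ℝ → ℝ) : ℝ :=
  (2 : ℝ) ^ k * ∫ x in dyadicI k l, f x * walsh k l n x

/-- A real-valued dyadic step function supported on `[0,1)²`. -/
def IsDyadicStep (F : ℝ → ℝ → ℝ) : Prop :=
  ∃ (s : Finset ((ℤ × ℕ) × (ℤ × ℕ))) (c : (ℤ × ℕ) × (ℤ × ℕ) → ℝ),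
    (∀ p ∈ s, dyadicI p.1.1 p.1.2 ⊆ Set.Ico (0 : ℝ) 1 ∧
      dyadicI p.2.1 p.2.2 ⊆ Set.Ico (0 : ℝ) 1) ∧
    ∀ x y : ℝ, F x y = ∑ p ∈ s, c p * Set.indicator (dyadicI p.1.1 p.1.2) 1 x *
      Set.indicator (dyadicI p.2.1 p.2.2) 1 y

/-- `F` is constant on dyadic squares with sides of length `2^{-M}`. -/
def ConstOnSquares (M : ℕ) (F : ℝ → ℝ → ℝ) : Prop :=
  ∀ l₁ l₂ : ℕ, ∀ x ∈ dyadicI (M : ℤ) l₁, ∀ x' ∈ dyadicI (M : ℤ) l₁,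
    ∀ y ∈ dyadicI (M : ℤ) l₂, ∀ y' ∈ dyadicI (M : ℤ) l₂, F x y = F x' y'

/-!
Every dyadic subinterval of `I` has generation at least that of `I`, so `f` is constant on the
`2 ^ M` dyadic children of `I` of some generation `M`. On the `i`-th child, `w_{I,n}` equals
`(-1) ^ walshExponent M n i` for `n < 2 ^ M`, and these signs form a Hadamard matrix; its
orthogonality gives the expansion. For `n ≥ 2 ^ M` the packet oscillates inside each child, so
its integral against `f` vanishes.
-/

open Finset

lemma mem_dyadicI_iff {K : ℤ} {L : ℕ} {x : ℝ} :
    x ∈ dyadicI K L ↔ 0 ≤ x ∧ ⌊x * 2 ^ K⌋₊ = L := by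
  have h2 : (0 : ℝ) < 2 ^ K := by positivity
  rw [dyadicI, Set.mem_Ico, zpow_neg, inv_mul_eq_div, inv_mul_eq_div, div_le_iff₀ h2,
    lt_div_iff₀ h2]
  constructor
  · rintro ⟨hL, hL'⟩
    have hx : 0 ≤ x := nonneg_of_mul_nonneg_left ((Nat.cast_nonneg L).trans hL) h2
    exact ⟨hx, (Nat.floor_eq_iff (by positivity)).2 ⟨hL, hL'⟩⟩
  · rintro ⟨hx, rfl⟩
    exact (Nat.floor_eq_iff (by positivity)).1 rfl

lemma left_mem_dyadicI (K : ℤ) (L : ℕ) : (2 : ℝ) ^ (-K) * L ∈ dyadicI K L :=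
  ⟨le_rfl, by gcongr; linarith⟩

lemma measurableSet_dyadicI (K : ℤ) (L : ℕ) : MeasurableSet (dyadicI K L) := measurableSet_Ico

lemma volume_dyadicI (K : ℤ) (L : ℕ) : volume (dyadicI K L) = ENNReal.ofReal (2 ^ (-K)) := by
  rw [dyadicI, Real.volume_Ico]
  ring_nf

lemma le_of_dyadicI_subset {K K' : ℤ} {L L' : ℕ} (h : dyadicI K' L' ⊆ dyadicI K L) :
    K ≤ K' := by
  have hvol := measure_mono (μ := volume) h
  rw [volume_dyadicI, volume_dyadicI, ENNReal.ofReal_le_ofReal_iff (by positivity),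
    zpow_le_zpow_iff_right₀ one_lt_two] at hvol
  omega

lemma dyadicI_subset_dyadicI_div (K : ℤ) (d L : ℕ) :
    dyadicI (K + d) L ⊆ dyadicI K (L / 2 ^ d) := by
  intro x hx
  rw [mem_dyadicI_iff] at hx ⊢
  refine ⟨hx.1, ?_⟩
  rw [← hx.2, ← Nat.floor_div_natCast, zpow_add₀ two_ne_zero, zpow_natCast, ← mul_assoc]
  push_cast
  rw [mul_div_cancel_right₀ _ (by positivity)]

lemma disjoint_dyadicI {K : ℤ} {L L' : ℕ} (h : L ≠ L') :
    Disjoint (dyadicI K L) (dyadicI K L') :=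
  Set.disjoint_left.2 fun _ hx hx' =>
    h ((mem_dyadicI_iff.1 hx).2.symm.trans (mem_dyadicI_iff.1 hx').2)

lemma dyadicI_subset_or_disjoint {K K' : ℤ} (h : K ≤ K') (L L' : ℕ) :
    dyadicI K' L' ⊆ dyadicI K L ∨ Disjoint (dyadicI K' L') (dyadicI K L) := by
  obtain ⟨d, rfl⟩ : ∃ d : ℕ, K' = K + d := ⟨(K' - K).toNat, by omega⟩
  rcases eq_or_ne (L' / 2 ^ d) L with rfl | hL
  · exact .inl (dyadicI_subset_dyadicI_div K d L')
  · exact .inr ((disjoint_dyadicI hL).mono_left (dyadicI_subset_dyadicI_div K d L'))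

lemma dyadicI_child_subset_child (K : ℤ) (L M d i : ℕ) :
    dyadicI (K + ↑(M + d)) (2 ^ (M + d) * L + i) ⊆ dyadicI (K + M) (2 ^ M * L + i / 2 ^ d) := by
  have hdiv : (2 ^ (M + d) * L + i) / 2 ^ d = 2 ^ M * L + i / 2 ^ d := by
    rw [pow_add, mul_comm (2 ^ M), mul_assoc, Nat.mul_add_div (Nat.two_pow_pos d)]
  rw [← hdiv, Nat.cast_add, ← add_assoc]
  exact dyadicI_subset_dyadicI_div _ d _

lemma dyadicI_child_subset {K : ℤ} {L M i : ℕ} (hi : i < 2 ^ M) :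
    dyadicI (K + M) (2 ^ M * L + i) ⊆ dyadicI K L := by
  simpa [Nat.div_eq_of_lt hi] using dyadicI_child_subset_child K L 0 M i

lemma biUnion_dyadicI_children (K : ℤ) (L M : ℕ) :
    ⋃ i ∈ range (2 ^ M), dyadicI (K + M) (2 ^ M * L + i) = dyadicI K L := by
  refine subset_antisymm (Set.iUnion₂_subset fun i hi => dyadicI_child_subset (mem_range.1 hi))
    fun x hx => ?_
  set L' := ⌊x * 2 ^ (K + M)⌋₊
  have hx' : x ∈ dyadicI (K + M) L' := mem_dyadicI_iff.2 ⟨(mem_dyadicI_iff.1 hx).1, rfl⟩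
  have hL : L' / 2 ^ M = L := by
    by_contra hne
    exact Set.disjoint_left.1 (disjoint_dyadicI hne) (dyadicI_subset_dyadicI_div K M L' hx') hx
  refine Set.mem_iUnion₂.2 ⟨L' % 2 ^ M, mem_range.2 (Nat.mod_lt _ (Nat.two_pow_pos M)), ?_⟩
  rwa [← hL, Nat.div_add_mod]

lemma bdigit_of_mem_dyadicI {K : ℤ} {L : ℕ} {x : ℝ} (hx : x ∈ dyadicI K L) (s : ℕ) :
    bdigit x (-K + s) = (L.testBit s).toNat := by
  obtain ⟨hx0, hL⟩ := mem_dyadicI_iff.1 hx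
  have hdiv : x / 2 ^ (-K + s) = x * 2 ^ K / (2 ^ s : ℕ) := by
    rw [zpow_add₀ two_ne_zero, zpow_neg, zpow_natCast]
    push_cast
    field_simp
  rw [bdigit, Int.floor_toNat, hdiv, Nat.floor_div_natCast, hL, Nat.toNat_testBit]

-- On the `i`-th dyadic child of generation `M` of `I`, the digit `x_{-j-k-1}` read by `w_{I,n}`
-- is bit `M - 1 - j` of `i`: hence the reversed index.
def walshExponent (M n i : ℕ) : ℕ :=
  ∑ j ∈ range M, (n.testBit j).toNat * (i.testBit (M - 1 - j)).toNat

lemma walshExponent_comm (M n i : ℕ) : walshExponent M n i = walshExponent M i n := by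
  rw [walshExponent, ← sum_range_reflect]
  refine sum_congr rfl fun j hj => ?_
  rw [mul_comm, Nat.sub_sub_self (by simp at hj; omega)]

lemma walshExponent_add {d w : ℕ} (m n v : ℕ) (hw : w < 2 ^ d) :
    walshExponent (m + d) n (2 ^ d * v + w) =
      walshExponent m n v + walshExponent d (n / 2 ^ m) w := by
  simp only [walshExponent, sum_range_add, Nat.testBit_two_pow_mul_add _ hw,
    Nat.testBit_div_two_pow]
  congr 1 <;> refine sum_congr rfl fun j hj => ?_ <;> simp only [mem_range] at hj
  · rw [if_neg (by omega)]; congr 3; omega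
  · rw [if_pos (by omega), add_comm j]; congr 3; omega

lemma sum_range_mul {β : Type*} [AddCommMonoid β] (A B : ℕ) (f : ℕ → β) :
    ∑ i ∈ range (A * B), f i = ∑ v ∈ range A, ∑ w ∈ range B, f (B * v + w) := by
  induction A with
  | zero => simp
  | succ A ih => rw [Nat.succ_mul, sum_range_add, ih, sum_range_succ, mul_comm B A]

section WalshSigns

variable {R : Type*} [CommRing R]

lemma sum_mul_neg_one_pow_walshExponent_add (m d n : ℕ) (g : ℕ → R) :
    ∑ i ∈ range (2 ^ (m + d)), g (i / 2 ^ d) * (-1) ^ walshExponent (m + d) n i =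
      (∑ v ∈ range (2 ^ m), g v * (-1) ^ walshExponent m n v) *
        ∑ w ∈ range (2 ^ d), (-1) ^ walshExponent d (n / 2 ^ m) w := by
  rw [pow_add, sum_range_mul, sum_mul]
  refine sum_congr rfl fun v _ => ?_
  rw [mul_sum]
  refine sum_congr rfl fun w hw => ?_
  rw [mem_range] at hw
  rw [walshExponent_add m n v hw, Nat.mul_add_div (Nat.two_pow_pos d), Nat.div_eq_of_lt hw,
    add_zero, pow_add, mul_assoc]

lemma sum_neg_one_pow_walshExponent {M n : ℕ} (hn : n < 2 ^ M) :
    ∑ i ∈ range (2 ^ M), (-1 : R) ^ walshExponent M n i = if n = 0 then 2 ^ M else 0 := by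
  induction M generalizing n with
  | zero => simp_all [walshExponent]
  | succ M ih =>
    have h := sum_mul_neg_one_pow_walshExponent_add 1 M n (fun _ => (1 : R))
    simp only [one_mul] at h
    rw [add_comm, h, ih (by omega)]
    rcases Nat.even_or_odd' n with ⟨q, rfl | rfl⟩ <;>
      simp [walshExponent, sum_range_succ, pow_add]

lemma sum_mul_neg_one_pow_walshExponent_eq_zero {m d n : ℕ} (hn : 2 ^ m ≤ n)
    (hn' : n < 2 ^ (m + d)) (g : ℕ → R) :
    ∑ i ∈ range (2 ^ (m + d)), g (i / 2 ^ d) * (-1) ^ walshExponent (m + d) n i = 0 := by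
  have hq : n / 2 ^ m < 2 ^ d := Nat.div_lt_of_lt_mul (by rwa [← pow_add])
  have hq' : n / 2 ^ m ≠ 0 := (Nat.div_pos hn (Nat.two_pow_pos m)).ne'
  rw [sum_mul_neg_one_pow_walshExponent_add, sum_neg_one_pow_walshExponent hq, if_neg hq',
    mul_zero]

lemma neg_one_pow_walshExponent_mul (m n i i' : ℕ) :
    (-1 : R) ^ walshExponent m n i * (-1) ^ walshExponent m n i' =
      (-1) ^ walshExponent m n (i ^^^ i') := by
  simp only [walshExponent, ← prod_pow_eq_pow_sum, ← prod_mul_distrib, Nat.testBit_xor]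
  refine prod_congr rfl fun j _ => ?_
  cases n.testBit j <;> cases i.testBit (m - 1 - j) <;> cases i'.testBit (m - 1 - j) <;> simp

lemma sum_neg_one_pow_walshExponent_mul {m i i' : ℕ} (hi : i < 2 ^ m) (hi' : i' < 2 ^ m) :
    ∑ n ∈ range (2 ^ m), (-1 : R) ^ walshExponent m n i * (-1) ^ walshExponent m n i' =
      if i = i' then 2 ^ m else 0 := by
  simp only [neg_one_pow_walshExponent_mul, walshExponent_comm m _ (i ^^^ i'),
    sum_neg_one_pow_walshExponent (Nat.xor_lt_two_pow hi hi'), Nat.xor_eq_zero_iff]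

end WalshSigns

lemma sum_range_testBit_mul_eq {n A B : ℕ} (hA : n < 2 ^ A) (hB : n < 2 ^ B) (g : ℕ → ℕ) :
    ∑ j ∈ range A, (n.testBit j).toNat * g j =
      ∑ j ∈ range B, (n.testBit j).toNat * g j := by
  wlog hAB : A ≤ B generalizing A B
  · exact (this hB hA (by omega)).symm
  refine sum_subset (range_subset_range.2 hAB) fun j _ hj => ?_
  rw [Nat.testBit_lt_two_pow (hA.trans_le (Nat.pow_le_pow_right two_pos (by simpa using hj)))]
  simp

lemma walsh_eq_of_mem {k : ℤ} {l M n i : ℕ} (hn : n < 2 ^ M) (hi : i < 2 ^ M) {x : ℝ}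
    (hx : x ∈ dyadicI (k + M) (2 ^ M * l + i)) :
    walsh k l n x = (-1) ^ walshExponent M n i := by
  have hn' : n < 2 ^ (n + 1) := Nat.lt_two_pow_self.trans (Nat.pow_lt_pow_succ one_lt_two)
  rw [walsh, Set.indicator_of_mem (dyadicI_child_subset hi hx), walshExponent,
    sum_range_testBit_mul_eq hn' hn]
  refine congrArg _ (sum_congr rfl fun j hj => ?_)
  have hj : j < M := mem_range.1 hj
  rw [show -(j : ℤ) - k - 1 = -(k + M) + ↑(M - 1 - j) by omega, bdigit_of_mem_dyadicI hx,
    Nat.testBit_two_pow_mul_add _ hi, if_pos (by omega)]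

lemma setIntegral_dyadicI_eq_sum {k : ℤ} {l M : ℕ} {h : ℝ → ℝ} {c : ℕ → ℝ}
    (hc : ∀ i < 2 ^ M, ∀ x ∈ dyadicI (k + M) (2 ^ M * l + i), h x = c i) :
    ∫ x in dyadicI k l, h x = ∑ i ∈ range (2 ^ M), c i * 2 ^ (-(k + M)) := by
  have hchild : ∀ i ∈ range (2 ^ M),
      Set.EqOn h (fun _ => c i) (dyadicI (k + M) (2 ^ M * l + i)) :=
    fun i hi x hx => hc i (mem_range.1 hi) x hx
  rw [← biUnion_dyadicI_children k l M,
    integral_biUnion_finset _ (fun _ _ => measurableSet_dyadicI _ _)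
    (fun i _ j _ hij => disjoint_dyadicI (by omega))
    (fun i hi => (integrableOn_const (by simp [volume_dyadicI])).congr_fun (hchild i hi).symm
      (measurableSet_dyadicI _ _))]
  refine sum_congr rfl fun i hi => ?_
  rw [setIntegral_congr_fun (measurableSet_dyadicI _ _) (hchild i hi), setIntegral_const,
    measureReal_def, volume_dyadicI, ENNReal.toReal_ofReal (by positivity), smul_eq_mul, mul_comm]

section StepFunction

variable {k : ℤ} {l M : ℕ} {f : ℝ → ℝ} {a : ℕ → ℝ}

lemma exists_eq_on_dyadicI_children (s : Finset (ℤ × ℕ)) (c : ℤ × ℕ → ℝ)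
    (hs : ∀ p ∈ s, dyadicI p.1 p.2 ⊆ dyadicI k l) :
    ∃ (M : ℕ) (a : ℕ → ℝ), ∀ i < 2 ^ M, ∀ x ∈ dyadicI (k + M) (2 ^ M * l + i),
      ∑ p ∈ s, c p * Set.indicator (dyadicI p.1 p.2) 1 x = a i := by
  set M := s.sup fun p => (p.1 - k).toNat
  refine ⟨M, fun i => ∑ p ∈ s, c p * Set.indicator (dyadicI p.1 p.2) 1
    ((2 : ℝ) ^ (-(k + M)) * ↑(2 ^ M * l + i)), fun i _ x hx => sum_congr rfl fun p hp => ?_⟩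
  have hkp := le_of_dyadicI_subset (hs p hp)
  have hpM : p.1 ≤ k + M := by
    have := le_sup (f := fun p : ℤ × ℕ => (p.1 - k).toNat) hp
    omega
  have hleft := left_mem_dyadicI (k + M) (2 ^ M * l + i)
  rcases dyadicI_subset_or_disjoint hpM p.2 (2 ^ M * l + i) with hsub | hdisj
  · rw [Set.indicator_of_mem (hsub hx), Set.indicator_of_mem (hsub hleft), Pi.one_apply,
      Pi.one_apply]
  · rw [Set.indicator_of_notMem (Set.disjoint_left.1 hdisj hx),
      Set.indicator_of_notMem (Set.disjoint_left.1 hdisj hleft)]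

lemma integral_mul_walsh_eq_sum
    (ha : ∀ i < 2 ^ M, ∀ x ∈ dyadicI (k + M) (2 ^ M * l + i), f x = a i)
    (d : ℕ) {n : ℕ} (hn : n < 2 ^ (M + d)) :
    ∫ t in dyadicI k l, f t * walsh k l n t =
      ∑ i ∈ range (2 ^ (M + d)),
        a (i / 2 ^ d) * (-1) ^ walshExponent (M + d) n i * 2 ^ (-(k + ↑(M + d))) := by
  refine setIntegral_dyadicI_eq_sum fun i hi x hx => ?_
  have hi' : i / 2 ^ d < 2 ^ M := Nat.div_lt_of_lt_mul (by rwa [← pow_add, add_comm])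
  rw [ha _ hi' x (dyadicI_child_subset_child k l M d i hx), walsh_eq_of_mem hn hi hx]

lemma integral_mul_walsh_eq_zero
    (ha : ∀ i < 2 ^ M, ∀ x ∈ dyadicI (k + M) (2 ^ M * l + i), f x = a i)
    {n : ℕ} (hn : 2 ^ M ≤ n) :
    ∫ t in dyadicI k l, f t * walsh k l n t = 0 := by
  have hn' : n < 2 ^ (M + n) :=
    Nat.lt_two_pow_self.trans_le (Nat.pow_le_pow_right two_pos (Nat.le_add_left n M))
  rw [integral_mul_walsh_eq_sum ha n hn', ← sum_mul,
    sum_mul_neg_one_pow_walshExponent_eq_zero hn hn', zero_mul]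

lemma sum_walshCoeff_mul_walsh
    (ha : ∀ i < 2 ^ M, ∀ x ∈ dyadicI (k + M) (2 ^ M * l + i), f x = a i)
    {x : ℝ} (hx : x ∈ dyadicI k l) :
    ∑ n ∈ range (2 ^ M),
      ((2 : ℝ) ^ k * ∫ t in dyadicI k l, f t * walsh k l n t) * walsh k l n x = f x := by
  obtain ⟨i, hi, hxi⟩ := Set.mem_iUnion₂.1 ((biUnion_dyadicI_children k l M).symm ▸ hx)
  have hi : i < 2 ^ M := mem_range.1 hi
  have hscale : (2 : ℝ) ^ k * 2 ^ (-(k + M)) = 2 ^ (-(M : ℤ)) := by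
    rw [← zpow_add₀ two_ne_zero]
    ring_nf
  have hterm : ∀ n ∈ range (2 ^ M),
      ((2 : ℝ) ^ k * ∫ t in dyadicI k l, f t * walsh k l n t) * walsh k l n x =
        ∑ j ∈ range (2 ^ M), a j * 2 ^ (-(M : ℤ)) *
          ((-1) ^ walshExponent M n j * (-1) ^ walshExponent M n i) := by
    intro n hn
    have := integral_mul_walsh_eq_sum ha 0 (n := n) (by simpa using mem_range.1 hn)
    simp only [add_zero, pow_zero, Nat.div_one] at this
    rw [this, walsh_eq_of_mem (mem_range.1 hn) hi hxi, mul_sum, sum_mul, ← hscale]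
    refine sum_congr rfl fun j _ => by ring
  rw [sum_congr rfl hterm, sum_comm]
  calc ∑ j ∈ range (2 ^ M), ∑ n ∈ range (2 ^ M), a j * 2 ^ (-(M : ℤ)) *
          ((-1) ^ walshExponent M n j * (-1) ^ walshExponent M n i)
      = ∑ j ∈ range (2 ^ M), if j = i then a j * 2 ^ (-(M : ℤ)) * 2 ^ M else 0 :=
        sum_congr rfl fun j hj => by
          rw [← mul_sum, sum_neg_one_pow_walshExponent_mul (mem_range.1 hj) hi, mul_ite, mul_zero]
    _ = a i := by
        rw [sum_ite_eq' _ _ _, if_pos (mem_range.2 hi), mul_assoc, ← zpow_natCast,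
          ← zpow_add₀ two_ne_zero, neg_add_cancel, zpow_zero, mul_one]
    _ = f x := (ha i hi x hxi).symm

end StepFunction

theorem walsh_fourier_expansion (k : ℤ) (l : ℕ) (f : ℝ → ℝ)
    (hf : ∃ (s : Finset (ℤ × ℕ)) (c : ℤ × ℕ → ℝ),
      (∀ p ∈ s, dyadicI p.1 p.2 ⊆ dyadicI k l) ∧
      ∀ x : ℝ, f x = ∑ p ∈ s, c p * Set.indicator (dyadicI p.1 p.2) 1 x) :
    ∃ N : ℕ,
      (∀ n : ℕ, N ≤ n → (∫ t in dyadicI k l, f t * walsh k l n t) = 0) ∧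
      ∀ᵐ x : ℝ ∂volume, x ∈ dyadicI k l →
        f x = ∑ n ∈ Finset.range N,
          ((2 : ℝ) ^ k * ∫ t in dyadicI k l, f t * walsh k l n t) * walsh k l n x := by
  obtain ⟨s, c, hs, hf⟩ := hf
  obtain ⟨M, a, hsa⟩ := exists_eq_on_dyadicI_children s c hs
  have ha : ∀ i < 2 ^ M, ∀ x ∈ dyadicI (k + M) (2 ^ M * l + i), f x = a i :=
    fun i hi x hx => (hf x).trans (hsa i hi x hx)
  exact ⟨2 ^ M, fun n hn => integral_mul_walsh_eq_zero ha hn,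
    ae_of_all _ fun x hx => (sum_walshCoeff_mul_walsh ha hx).symm⟩
end

section
/- Define for real-valued dyadic step functions F₁ on [0,1)² and a tile I×J×Ω the quantity B₂(I×J×Ω) := ( |J|^{-1} ∫_J ( |I|^{-1} ∫_I F₁(x,y) dx ) w_{J×Ω}(y) dy )². Then for any multitile P = I×J×Ω (with |I|=|J|=2|Ω|^{-1}), the first-order difference (□B₂)(P) := (1/4)Σ_{α,β∈{0,1}} B₂(I_α×J_β×Ω) − Σ_{γ∈{0,1}} B₂(I×J×Ω_γ) equals Σ_{γ∈{0,1}} ( |J|^{-1} ∫_J ( |I|^{-1} ∫_I F₁(x,y) w_{I,1}(x) dx ) w_{J×Ω_γ}(y) dy )², and in particular (□B₂)(P) ≥ 0. -/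
open MeasureTheory

/-- `B₂` evaluated at the tile `I × J × Ω` with `I = [2^{-k}l₁, ·)`, `J = [2^{-k}l₂, ·)`,
`Ω = [2^k n, 2^k (n+1))`. -/
noncomputable def B2 (F : ℝ → ℝ → ℝ) (k : ℤ) (l₁ l₂ n : ℕ) : ℝ :=
  (avg k l₂ n (fun y => avg k l₁ 0 (fun x => F x y))) ^ 2

/-!
On the half `I_β` of a dyadic interval `I`, the Walsh packet `w_{I,2m+ε}` equals
`(-1)^{εβ} w_{I_β,m}`, so every Walsh average over `I` at frequency `2m+ε` is
`(a₀ + (-1)^ε a₁)/2` in terms of the averages `a_β` over the halves at frequency `m`.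
Applying this in both variables writes all terms of `□B₂(P)` through the four averages
`a_{αβ}` of `F₁` over the children `I_α × J_β`, and the identity becomes the parallelogram law
`((u + v)/2)² + ((u - v)/2)² = (u² + v²)/2`.
-/

open Finset

lemma measurableSet_dyadicI_s8 (k : ℤ) (l : ℕ) : MeasurableSet (dyadicI k l) :=
  measurableSet_Ico

lemma measurable_bdigit (j : ℤ) : Measurable fun x => bdigit x j :=
  (measurable_of_countable fun z : ℤ => z.toNat % 2).comp
    (Int.measurable_floor.comp (measurable_id.div_const _))

lemma measurable_walsh (k : ℤ) (l n : ℕ) : Measurable (walsh k l n) := by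
  refine Measurable.indicator ?_ (measurableSet_dyadicI_s8 k l)
  refine (measurable_of_countable fun m : ℕ => (-1 : ℝ) ^ m).comp
    (Finset.measurable_sum _ fun j _ => ?_)
  exact (measurable_of_countable fun m : ℕ => (n.testBit j).toNat * m).comp (measurable_bdigit _)

lemma norm_walsh_le_one (k : ℤ) (l n : ℕ) (x : ℝ) : ‖walsh k l n x‖ ≤ 1 := by
  unfold walsh
  by_cases hx : x ∈ dyadicI k l
  · simp [Set.indicator_of_mem hx]
  · simp [Set.indicator_of_notMem hx]

lemma MeasureTheory.Integrable.mul_walsh {g : ℝ → ℝ} (hg : Integrable g) (k : ℤ) (l n : ℕ) :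
    Integrable fun x => g x * walsh k l n x :=
  hg.mul_bdd (measurable_walsh k l n).aestronglyMeasurable (.of_forall (norm_walsh_le_one k l n))

lemma integrable_indicator_dyadicI (k : ℤ) (l : ℕ) (c : ℝ) :
    Integrable ((dyadicI k l).indicator fun _ => c) :=
  (integrableOn_const measure_Ico_lt_top.ne).integrable_indicator (measurableSet_dyadicI_s8 k l)

lemma dyadicI_eq_union (k : ℤ) (l : ℕ) :
    dyadicI k l = dyadicI (k + 1) (2 * l) ∪ dyadicI (k + 1) (2 * l + 1) := by
  have hscale : (2 : ℝ) ^ (-k) = 2 ^ (-(k + 1)) * 2 := by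
    rw [show -k = -(k + 1) + 1 by ring, zpow_add_one₀ two_ne_zero]
  have hpos : (0 : ℝ) < 2 ^ (-(k + 1)) := by positivity
  unfold dyadicI
  push_cast
  rw [Set.Ico_union_Ico_eq_Ico (by nlinarith) (by nlinarith), hscale]
  congr 1 <;> ring

lemma disjoint_dyadicI_two_mul (k : ℤ) (l : ℕ) :
    Disjoint (dyadicI (k + 1) (2 * l)) (dyadicI (k + 1) (2 * l + 1)) := by
  simp only [dyadicI, Set.disjoint_left, Set.mem_Ico]
  rintro x ⟨-, hlt⟩ ⟨hle, -⟩
  push_cast at hlt hle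
  linarith

lemma dyadicI_two_mul_add_subset {β : ℕ} (hβ : β < 2) (k : ℤ) (l : ℕ) :
    dyadicI (k + 1) (2 * l + β) ⊆ dyadicI k l := by
  rw [dyadicI_eq_union k l]
  interval_cases β
  · exact Set.subset_union_left
  · exact Set.subset_union_right

lemma floor_div_eq_of_mem_dyadicI {k : ℤ} {l : ℕ} {x : ℝ} (hx : x ∈ dyadicI k l) :
    ⌊x / 2 ^ (-k)⌋ = l := by
  obtain ⟨hle, hlt⟩ := hx
  have hpos : (0 : ℝ) < 2 ^ (-k) := by positivity
  rw [Int.floor_eq_iff, le_div_iff₀ hpos, div_lt_iff₀ hpos]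
  push_cast
  constructor <;> linarith

lemma bdigit_eq_of_mem_dyadicI {k : ℤ} {l : ℕ} {x : ℝ} (hx : x ∈ dyadicI k l) :
    bdigit x (-k) = l % 2 := by
  rw [bdigit, floor_div_eq_of_mem_dyadicI hx, Int.toNat_natCast]

lemma sum_range_testBit_mul_of_le (m : ℕ) (f : ℕ → ℕ) {L L' : ℕ} (hLL' : L ≤ L') (hL : m < 2 ^ L) :
    ∑ j ∈ range L, (m.testBit j).toNat * f j = ∑ j ∈ range L', (m.testBit j).toNat * f j := by
  refine sum_subset (range_subset_range.2 hLL') fun j _ hj => ?_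
  have hmj : m < 2 ^ j := hL.trans_le (Nat.pow_le_pow_right two_pos (by simpa using hj))
  simp [Nat.testBit_lt_two_pow hmj]

lemma sum_range_testBit_mul_of_lt_two_pow {m N : ℕ} (f : ℕ → ℕ) (hN : m < 2 ^ N) :
    ∑ j ∈ range N, (m.testBit j).toNat * f j = ∑ j ∈ range (m + 1), (m.testBit j).toNat * f j := by
  have hm : m < 2 ^ (m + 1) :=
    Nat.lt_two_pow_self.trans (Nat.pow_lt_pow_right one_lt_two m.lt_succ_self)
  rcases le_total N (m + 1) with h | h
  · exact sum_range_testBit_mul_of_le m f h hN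
  · exact (sum_range_testBit_mul_of_le m f h hm).symm

lemma sum_range_testBit_two_mul_add (m : ℕ) {ε : ℕ} (hε : ε < 2) (f : ℕ → ℕ) :
    ∑ j ∈ range (2 * m + ε + 1), ((2 * m + ε).testBit j).toNat * f j
      = ε * f 0 + ∑ j ∈ range (m + 1), (m.testBit j).toNat * f (j + 1) := by
  have hbit0 : ((2 * m + ε).testBit 0).toNat = ε := by
    rw [Nat.testBit_zero]; interval_cases ε <;> simp
  have hbit : ∀ j, (2 * m + ε).testBit (j + 1) = m.testBit j := fun j => by
    rw [Nat.testBit_succ]; congr 1; omega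
  have hm : m < 2 ^ (2 * m + ε) :=
    Nat.lt_two_pow_self.trans_le (Nat.pow_le_pow_right two_pos (by omega))
  simp only [sum_range_succ' _ (2 * m + ε), hbit, hbit0,
    sum_range_testBit_mul_of_lt_two_pow (fun j => f (j + 1)) hm]
  ring

lemma walsh_two_mul_add_of_mem {k : ℤ} {l m ε β : ℕ} (hε : ε < 2) (hβ : β < 2) {x : ℝ}
    (hx : x ∈ dyadicI (k + 1) (2 * l + β)) :
    walsh k l (2 * m + ε) x = (-1) ^ (ε * β) * walsh (k + 1) (2 * l + β) m x := by
  have hdigit : bdigit x (-((0 : ℕ) : ℤ) - k - 1) = β := by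
    rw [show -((0 : ℕ) : ℤ) - k - 1 = -(k + 1) by push_cast; ring, bdigit_eq_of_mem_dyadicI hx]
    omega
  have hshift : ∀ j : ℕ,
      bdigit x (-((j + 1 : ℕ) : ℤ) - k - 1) = bdigit x (-(j : ℤ) - (k + 1) - 1) :=
    fun j => by congr 1; push_cast; ring
  unfold walsh
  rw [Set.indicator_of_mem (dyadicI_two_mul_add_subset hβ k l hx), Set.indicator_of_mem hx,
    sum_range_testBit_two_mul_add m hε, hdigit, pow_add]
  simp only [hshift]

lemma avg_two_mul_add (k : ℤ) (l m : ℕ) {ε : ℕ} (hε : ε < 2) {g : ℝ → ℝ} (hg : Integrable g) :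
    avg k l (2 * m + ε) g
      = (avg (k + 1) (2 * l) m g + (-1) ^ ε * avg (k + 1) (2 * l + 1) m g) / 2 := by
  have hgw := hg.mul_walsh k l (2 * m + ε)
  have hleft : ∫ x in dyadicI (k + 1) (2 * l), g x * walsh k l (2 * m + ε) x
      = ∫ x in dyadicI (k + 1) (2 * l), g x * walsh (k + 1) (2 * l) m x := by
    refine setIntegral_congr_fun (measurableSet_dyadicI_s8 _ _) fun x hx => ?_
    simp [walsh_two_mul_add_of_mem (m := m) hε two_pos (l := l) (β := 0) (by simpa using hx)]
  have hright : ∫ x in dyadicI (k + 1) (2 * l + 1), g x * walsh k l (2 * m + ε) x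
      = (-1) ^ ε * ∫ x in dyadicI (k + 1) (2 * l + 1), g x * walsh (k + 1) (2 * l + 1) m x := by
    rw [← integral_const_mul]
    refine setIntegral_congr_fun (measurableSet_dyadicI_s8 _ _) fun x hx => ?_
    simp only [walsh_two_mul_add_of_mem hε one_lt_two hx, mul_one]
    ring
  rw [avg, dyadicI_eq_union k l, setIntegral_union (disjoint_dyadicI_two_mul k l)
    (measurableSet_dyadicI_s8 _ _) hgw.integrableOn hgw.integrableOn, hleft, hright, avg, avg,
    zpow_add_one₀ two_ne_zero]
  ring

lemma avg_add (k : ℤ) (l n : ℕ) {f g : ℝ → ℝ} (hf : Integrable f) (hg : Integrable g) :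
    avg k l n (fun x => f x + g x) = avg k l n f + avg k l n g := by
  simp only [avg, add_mul]
  rw [integral_add (hf.mul_walsh k l n).integrableOn (hg.mul_walsh k l n).integrableOn, mul_add]

lemma avg_const_mul (k : ℤ) (l n : ℕ) (c : ℝ) (f : ℝ → ℝ) :
    avg k l n (fun x => c * f x) = c * avg k l n f := by
  simp only [avg, mul_assoc, integral_const_mul]
  ring

lemma avg_finset_sum {ι : Type*} (k : ℤ) (l n : ℕ) (s : Finset ι) {f : ι → ℝ → ℝ}
    (hf : ∀ i ∈ s, Integrable (f i)) :
    avg k l n (fun x => ∑ i ∈ s, f i x) = ∑ i ∈ s, avg k l n (f i) := by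
  simp only [avg, sum_mul]
  rw [integral_finsetSum s fun i hi => ((hf i hi).mul_walsh k l n).integrableOn, mul_sum]

lemma avg_avg_two_mul_add {F : ℝ → ℝ → ℝ} (hF : ∀ y, Integrable fun x => F x y) {k : ℤ} {m : ℕ}
    (hFavg : ∀ l, Integrable fun y => avg (k + 1) l m fun x => F x y)
    (l₁ l₂ n : ℕ) {ε γ : ℕ} (hε : ε < 2) (hγ : γ < 2) :
    avg k l₂ (2 * n + γ) (fun y => avg k l₁ (2 * m + ε) fun x => F x y)
      = (avg (k + 1) (2 * l₂) n (fun y => avg (k + 1) (2 * l₁) m fun x => F x y)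
          + (-1) ^ ε * avg (k + 1) (2 * l₂) n (fun y => avg (k + 1) (2 * l₁ + 1) m fun x => F x y)
          + (-1) ^ γ * (avg (k + 1) (2 * l₂ + 1) n (fun y => avg (k + 1) (2 * l₁) m fun x => F x y)
            + (-1) ^ ε * avg (k + 1) (2 * l₂ + 1) n
                (fun y => avg (k + 1) (2 * l₁ + 1) m fun x => F x y))) / 4 := by
  set G₀ := fun y => avg (k + 1) (2 * l₁) m fun x => F x y
  set G₁ := fun y => avg (k + 1) (2 * l₁ + 1) m fun x => F x y
  have hsplit : (fun y => avg k l₁ (2 * m + ε) fun x => F x y)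
      = fun y => 2⁻¹ * G₀ y + ((-1) ^ ε / 2) * G₁ y :=
    funext fun y => by rw [avg_two_mul_add k l₁ m hε (hF y)]; ring
  have hG₀ : Integrable G₀ := hFavg _
  have hG₁ : Integrable G₁ := hFavg _
  have havg : ∀ l, avg (k + 1) l n (fun y => 2⁻¹ * G₀ y + ((-1) ^ ε / 2) * G₁ y)
      = 2⁻¹ * avg (k + 1) l n G₀ + ((-1) ^ ε / 2) * avg (k + 1) l n G₁ := fun l => by
    rw [avg_add _ _ _ (hG₀.const_mul _) (hG₁.const_mul _), avg_const_mul, avg_const_mul]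
  have hcomb : Integrable fun y => 2⁻¹ * G₀ y + ((-1) ^ ε / 2) * G₁ y :=
    (hG₀.const_mul _).add (hG₁.const_mul _)
  rw [hsplit, avg_two_mul_add k l₂ n hγ hcomb, havg, havg]
  ring

section SeparableSum

variable {ι : Type*} {s : Finset ι} {f g : ι → ℝ → ℝ} {F : ℝ → ℝ → ℝ}

lemma integrable_section_of_eq_sum (hf : ∀ i ∈ s, Integrable (f i))
    (hF : ∀ x y, F x y = ∑ i ∈ s, g i y * f i x) (y : ℝ) : Integrable fun x => F x y := by
  simp only [hF]
  exact integrable_finsetSum s fun i hi => (hf i hi).const_mul _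

lemma avg_section_eq_sum (hf : ∀ i ∈ s, Integrable (f i))
    (hF : ∀ x y, F x y = ∑ i ∈ s, g i y * f i x) (k : ℤ) (l n : ℕ) (y : ℝ) :
    avg k l n (fun x => F x y) = ∑ i ∈ s, g i y * avg k l n (f i) := by
  simp only [hF]
  rw [avg_finset_sum k l n s fun i hi => (hf i hi).const_mul _]
  exact sum_congr rfl fun i _ => avg_const_mul k l n _ _

lemma integrable_avg_section_of_eq_sum (hf : ∀ i ∈ s, Integrable (f i))
    (hg : ∀ i ∈ s, Integrable (g i)) (hF : ∀ x y, F x y = ∑ i ∈ s, g i y * f i x)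
    (k : ℤ) (l n : ℕ) : Integrable fun y => avg k l n fun x => F x y := by
  simp only [avg_section_eq_sum hf hF]
  exact integrable_finsetSum s fun i hi => (hg i hi).mul_const _

end SeparableSum

lemma IsDyadicStep.exists_eq_sum_mul {F : ℝ → ℝ → ℝ} (hF : IsDyadicStep F) :
    ∃ (s : Finset ((ℤ × ℕ) × (ℤ × ℕ))) (f g : (ℤ × ℕ) × (ℤ × ℕ) → ℝ → ℝ),
      (∀ i ∈ s, Integrable (f i)) ∧ (∀ i ∈ s, Integrable (g i)) ∧
      ∀ x y, F x y = ∑ i ∈ s, g i y * f i x := by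
  obtain ⟨s, c, -, hrep⟩ := hF
  refine ⟨s, fun p => (dyadicI p.1.1 p.1.2).indicator fun _ => 1,
    fun p => (dyadicI p.2.1 p.2.2).indicator fun _ => c p,
    fun p _ => integrable_indicator_dyadicI _ _ _, fun p _ => integrable_indicator_dyadicI _ _ _,
    fun x y => ?_⟩
  rw [hrep]
  refine sum_congr rfl fun p _ => ?_
  simp only [Set.indicator, Pi.one_apply]
  split_ifs <;> ring

theorem box_B2 (F₁ : ℝ → ℝ → ℝ) (hF₁ : IsDyadicStep F₁) (k : ℤ) (l₁ l₂ n : ℕ) :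
    (1 / 4) * (∑ α ∈ Finset.range 2, ∑ β ∈ Finset.range 2,
        B2 F₁ (k + 1) (2 * l₁ + α) (2 * l₂ + β) n)
      - (∑ γ ∈ Finset.range 2, B2 F₁ k l₁ l₂ (2 * n + γ))
    = (∑ γ ∈ Finset.range 2,
        (avg k l₂ (2 * n + γ) (fun y => avg k l₁ 1 (fun x => F₁ x y))) ^ 2) ∧
    0 ≤ (1 / 4) * (∑ α ∈ Finset.range 2, ∑ β ∈ Finset.range 2,
        B2 F₁ (k + 1) (2 * l₁ + α) (2 * l₂ + β) n)
      - (∑ γ ∈ Finset.range 2, B2 F₁ k l₁ l₂ (2 * n + γ)) := by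
  obtain ⟨s, f, g, hf, hg, hrep⟩ := hF₁.exists_eq_sum_mul
  have hparent := fun {ε γ : ℕ} (hε : ε < 2) (hγ : γ < 2) =>
    avg_avg_two_mul_add (integrable_section_of_eq_sum hf hrep)
      (integrable_avg_section_of_eq_sum hf hg hrep (k + 1) · 0) l₁ l₂ n hε hγ
  simp only [mul_zero, zero_add] at hparent
  refine (fun hbox => ⟨hbox, hbox ▸ sum_nonneg fun γ _ => sq_nonneg _⟩) ?_
  simp only [sum_range_succ, sum_range_zero, zero_add, B2]
  rw [hparent (ε := 0) two_pos two_pos, hparent (ε := 0) two_pos one_lt_two,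
    hparent (ε := 1) one_lt_two two_pos, hparent (ε := 1) one_lt_two one_lt_two,
    add_zero, add_zero]
  ring
end
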